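/- In G_n, no 3-element support contains more than two vertices from the neighborhood of a fixed signplace: if all vertices in a set S intersect coordinate i with value +1 and S is independent, then at most 2 vertices of S share the same support. -/

import Mathlib

/-- The vertex set of the graph `G_n`: vectors in `{-1,0,1}^n` with exactly three
nonzero coordinates. -/
def Gvert (n : ℕ) : Type :=
  {v : Fin n → ℤ // (∀ i, v i = -1 ∨ v i = 0 ∨ v i = 1) ∧
    (Finset.univ.filter (fun i => v i ≠ 0)).card = 3}

/-- The graph `G_n`: two such vectors are adjacent iff their scalar product is `1`. -/
def G (n : ℕ) : SimpleGraph (Gvert n) where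
  Adj u v := u ≠ v ∧ ∑ i, u.1 i * v.1 i = 1
  symm := by
    constructor
    rintro u v ⟨h1, h2⟩
    exact ⟨h1.symm, (Finset.sum_congr rfl fun i _ => mul_comm _ _).trans h2⟩
  loopless := by constructor; rintro u ⟨h1, -⟩; exact h1 rfl

/-- A set of vertices is independent if no two of its members are adjacent. -/
def IsIndep {V : Type*} (H : SimpleGraph V) (s : Set V) : Prop :=
  s.Pairwise fun u v => ¬ H.Adj u v

/-- The constant `c(n)` from the paper. -/
def c (n : ℕ) : ℕ := if n % 4 = 0 then 0 else if n % 4 = 1 then 1 else 2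

/-! Two vertices with the same support `b` have scalar product `|b| - 2k`, where `k` is the
number of positions where they disagree. For distinct non-adjacent vertices agreeing at `i`
the value `3 - 2k` must avoid `3` and `1`, so `k = 2`: they disagree at both other positions of
the support. Hence the value at one such position `a` determines a vertex of `S` with support
`b`, and there are only the two values `±1`. -/

lemma Int.mul_eq_ite_of_sign {s t : ℤ} (hs : s = -1 ∨ s = 1) (ht : t = -1 ∨ t = 1) :
    s * t = if s = t then 1 else -1 := by
  rcases hs with rfl | rfl <;> rcases ht with rfl | rfl <;> decide

namespace Gvert

variable {n : ℕ}

def support (v : Gvert n) : Finset (Fin n) := Finset.univ.filter fun j => v.1 j ≠ 0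

def disagreements (u v : Gvert n) : Finset (Fin n) := u.support.filter fun j => u.1 j ≠ v.1 j

@[simp]
lemma mem_support {v : Gvert n} {j : Fin n} : j ∈ v.support ↔ v.1 j ≠ 0 := by
  simp [support]

lemma card_support (v : Gvert n) : v.support.card = 3 := v.2.2

lemma apply_eq_zero_of_notMem_support {v : Gvert n} {j : Fin n} (hj : j ∉ v.support) :
    v.1 j = 0 := by
  simpa using hj

lemma apply_eq_neg_one_or_one {v : Gvert n} {j : Fin n} (hj : j ∈ v.support) :
    v.1 j = -1 ∨ v.1 j = 1 := by
  rcases v.2.1 j with h | h | h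
  · exact Or.inl h
  · exact absurd h (mem_support.mp hj)
  · exact Or.inr h

lemma disagreements_nonempty {u v : Gvert n} (hsupp : u.support = v.support) (huv : u ≠ v) :
    (disagreements u v).Nonempty := by
  by_contra hempty
  refine huv (Subtype.ext (funext fun j => ?_))
  by_cases hj : j ∈ u.support
  · by_contra hne
    exact hempty ⟨j, Finset.mem_filter.mpr ⟨hj, hne⟩⟩
  · rw [apply_eq_zero_of_notMem_support hj,
      apply_eq_zero_of_notMem_support (hsupp ▸ hj : j ∉ v.support)]

lemma sum_mul_eq_card_sub_two_mul_card_disagreements {u v : Gvert n}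
    (hsupp : u.support = v.support) :
    ∑ j, u.1 j * v.1 j = (u.support.card : ℤ) - 2 * (disagreements u v).card := by
  have hsum_support : ∑ j, u.1 j * v.1 j = ∑ j ∈ u.support, u.1 j * v.1 j :=
    (Finset.sum_subset (Finset.subset_univ _) fun j _ hj => by
      rw [apply_eq_zero_of_notMem_support hj, zero_mul]).symm
  have hsigns : ∀ j ∈ u.support, u.1 j * v.1 j = if u.1 j = v.1 j then 1 else -1 :=
    fun j hj => Int.mul_eq_ite_of_sign (apply_eq_neg_one_or_one hj)
      (apply_eq_neg_one_or_one (hsupp ▸ hj))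
  have hcard := Finset.card_filter_add_card_filter_not (s := u.support) fun j => u.1 j = v.1 j
  rw [hsum_support, Finset.sum_congr rfl hsigns, Finset.sum_ite]
  simp only [Finset.sum_const, nsmul_eq_mul, mul_one, mul_neg, disagreements, ne_eq] at hcard ⊢
  omega

lemma apply_ne_of_not_adj {u v : Gvert n} (huv : u ≠ v) (hadj : ¬ (G n).Adj u v)
    (hsupp : u.support = v.support) {i : Fin n} (hi : i ∈ u.support) (hui : u.1 i = v.1 i)
    {j : Fin n} (hj : j ∈ u.support) (hji : j ≠ i) : u.1 j ≠ v.1 j := by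
  have hsub : disagreements u v ⊆ u.support.erase i := fun k hk => by
    obtain ⟨hk, hne⟩ := Finset.mem_filter.mp hk
    exact Finset.mem_erase.mpr ⟨fun hki => hne (hki ▸ hui), hk⟩
  have hpos := (disagreements_nonempty hsupp huv).card_pos
  have hsum_ne : ∑ k, u.1 k * v.1 k ≠ 1 := fun h => hadj ⟨huv, h⟩
  rw [sum_mul_eq_card_sub_two_mul_card_disagreements hsupp, card_support] at hsum_ne
  have heq : disagreements u v = u.support.erase i :=
    Finset.eq_of_subset_of_card_le hsub (by
      rw [Finset.card_erase_of_mem hi, card_support]; omega)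
  have hj' : j ∈ disagreements u v := heq ▸ Finset.mem_erase.mpr ⟨hji, hj⟩
  exact (Finset.mem_filter.mp hj').2

end Gvert

/-- If all vertices of an independent set `S` in `G_n` intersect the signplace `i⁺`
(i.e. have `i`-th coordinate `+1`), then at most `2` vertices of `S` share any given
support. -/
theorem neighborhood_support_le_two (n : ℕ) (i : Fin n) (S : Finset (Gvert n))
    (hS : IsIndep (G n) ↑S) (hplus : ∀ v ∈ S, v.1 i = 1) (b : Finset (Fin n)) :
    (S.filter fun v => (Finset.univ.filter fun j => v.1 j ≠ 0) = b).card ≤ 2 := by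
  change (S.filter fun v => v.support = b).card ≤ 2
  set T := S.filter fun v => v.support = b
  rcases T.eq_empty_or_nonempty with hT | ⟨u₀, hu₀⟩
  · simp [hT]
  have hmem : ∀ {v}, v ∈ T → v ∈ S ∧ v.support = u₀.support := fun hv => by
    rw [Finset.mem_filter] at hv hu₀
    exact ⟨hv.1, hv.2.trans hu₀.2.symm⟩
  obtain ⟨a, ha, hai⟩ := Finset.exists_mem_ne (by rw [u₀.card_support]; omega) i
  have hmaps : Set.MapsTo (fun v : Gvert n => v.1 a) T ({-1, 1} : Finset ℤ) := fun v hv => by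
    simpa using Gvert.apply_eq_neg_one_or_one ((hmem hv).2 ▸ ha)
  have hinj : Set.InjOn (fun v : Gvert n => v.1 a) T := by
    intro u hu v hv heq
    obtain ⟨huS, hu⟩ := hmem hu
    obtain ⟨hvS, hv⟩ := hmem hv
    by_contra huv
    have hi : i ∈ u.support := Gvert.mem_support.mpr (by simp [hplus u huS])
    exact Gvert.apply_ne_of_not_adj huv (hS huS hvS huv) (hu.trans hv.symm) hi
      ((hplus u huS).trans (hplus v hvS).symm) (hu ▸ ha) hai heq
  exact Finset.card_le_card_of_injOn _ hmaps hinj
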